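/- arXiv:0710.0130 — 7 statements merged into one kernel-verified Lean document; each statement's English description precedes it below -/
import Mathlib

section
/- If X is a Polish space and τ is a Polish topology on X finer than the original topology, then there exists a dense G_δ subset of X (for the original topology) on which the two topologies coincide. -/
/-!
Fix a countable basis `b` of `τ`. Every `u ∈ b` is `τ`-open, hence `τ`-Borel, and since
both topologies are Polish and `τ ≤ t` they have the same Borel sets, so `u` is `t`-Borel.
A Borel set in a Baire space differs from some open set `v u` only by a meager set, so
on a dense `G_δ` set `G` outside the countably many exceptional meager sets we get
`G ∩ u = G ∩ v u`. Thus every basic `τ`-open set is relatively `t`-open in `G`.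
-/

open Set Topology Filter TopologicalSpace

theorem exists_dense_isGδ_forall_inter_eq_inter_isOpen {X ι : Type*} [TopologicalSpace X]
    [BaireSpace X] [MeasurableSpace X] [BorelSpace X] [Countable ι] {s : ι → Set X}
    (hs : ∀ i, MeasurableSet (s i)) :
    ∃ G : Set X, Dense G ∧ IsGδ G ∧ ∀ i, ∃ v, IsOpen v ∧ G ∩ s i = G ∩ v := by
  choose v hv_open hsv using fun i => (hs i).residualEq_isOpen
  have hagree : ∀ᶠ x in residual X, ∀ i, x ∈ s i ↔ x ∈ v i :=
    eventually_countable_forall.2 fun i => (hsv i).mem_iff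
  obtain ⟨G, hG_sub, hGδ, hG_dense⟩ := mem_residual.1 hagree
  refine ⟨G, hG_dense, hGδ, fun i => ⟨v i, hv_open i, ?_⟩⟩
  ext x
  exact and_congr_right fun hx => hG_sub hx i

theorem induced_eq_induced_of_isOpen_preimage_basis {X Y : Type*} {t τ : TopologicalSpace X}
    (hle : τ ≤ t) (f : Y → X) {b : Set (Set X)} (hb : @IsTopologicalBasis X τ b)
    (hopen : ∀ u ∈ b, IsOpen[induced f t] (f ⁻¹' u)) :
    induced f t = induced f τ := by
  refine le_antisymm ?_ (induced_mono hle)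
  rw [@IsTopologicalBasis.eq_generateFrom _ (induced f τ) _ (hb.induced f)]
  exact le_generateFrom <| forall_mem_image.2 hopen

/-- If `X` is a Polish space and `τ` is a Polish topology on `X` finer than the
original topology `t`, then there is a dense (for `t`) `G_δ` (for `t`) subset
`G` of `X` on which the two subspace topologies coincide. -/
theorem stmt_1 {X : Type*} (t τ : TopologicalSpace X)
    (ht : @PolishSpace X t) (hτ : @PolishSpace X τ)
    (hfiner : τ ≤ t) :
    ∃ G : Set X, @Dense X t G ∧ @IsGδ X t G ∧
      TopologicalSpace.induced ((↑) : G → X) t =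
        TopologicalSpace.induced ((↑) : G → X) τ := by
  let := t
  let : MeasurableSpace X := borel X
  have : BorelSpace X := ⟨rfl⟩
  obtain ⟨b, hb_count, -, hb⟩ := @exists_countable_basis X τ hτ.toSecondCountableTopology
  have hb_meas : ∀ u : b, MeasurableSet (u : Set X) := fun u =>
    (MeasureTheory.borel_eq_borel_of_le hτ ht hfiner).le _
      (MeasurableSpace.measurableSet_generateFrom (hb.isOpen (t := τ) u.2))
  have := hb_count.to_subtype
  obtain ⟨G, hG_dense, hGδ, hG⟩ := exists_dense_isGδ_forall_inter_eq_inter_isOpen hb_meas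
  refine ⟨G, hG_dense, hGδ, induced_eq_induced_of_isOpen_preimage_basis hfiner _ hb ?_⟩
  intro u hu
  obtain ⟨v, hv_open, huv⟩ := hG ⟨u, hu⟩
  rw [Subtype.preimage_coe_eq_preimage_coe_iff.2 huv]
  exact isOpen_induced hv_open
end

section
/- With h_n defined by h_n(α)(k) = α(k) if 2^n does not divide k+1, and h_n(α)(2^n q − 1) = α(2^{n+1}q − 2^n − 1), one has: for all 0 < p < n and all α ∈ 2^ω, h_p(h_n(α)) = h_p(α). -/
/-!
At a coordinate `k = 2^p q - 1`, `h_p` reads its argument at `2^(p+1) q - 2^p - 1 = 2^p (2q - 1) - 1`,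
and `2^p (2q - 1)` is not divisible by `2^n` for `n > p`, so `h_n` leaves that coordinate alone.
At every other coordinate `2^p ∤ k + 1`, hence also `2^n ∤ k + 1`, and both maps are the identity.
-/

/-- `h n α` agrees with `α` except at coordinates `k = 2^n * q - 1` (`q ≥ 1`),
where its value is `α (2^(n+1) * q - 2^n - 1)`. -/
def hmap (n : ℕ) (α : ℕ → Bool) : ℕ → Bool := fun k =>
  if 2 ^ n ∣ (k + 1) then α (2 ^ (n + 1) * ((k + 1) / 2 ^ n) - 2 ^ n - 1) else α k

theorem not_two_pow_dvd_two_pow_mul_odd {p n m : ℕ} (hpn : p < n) (hm : Odd m) :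
    ¬ 2 ^ n ∣ 2 ^ p * m := fun h => by
  have h' : 2 ^ p * 2 ∣ 2 ^ p * m := (pow_succ 2 p ▸ Nat.pow_dvd_pow 2 hpn).trans h
  exact Nat.not_even_iff_odd.mpr hm <|
    even_iff_two_dvd.mpr (Nat.dvd_of_mul_dvd_mul_left (by positivity) h')

theorem two_pow_succ_mul_sub_add_one {p q : ℕ} (hq : 0 < q) :
    2 ^ (p + 1) * q - 2 ^ p - 1 + 1 = 2 ^ p * (2 * q - 1) := by
  have hle : 2 ^ p ≤ 2 ^ p * q := Nat.le_mul_of_pos_right _ hq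
  have hpos : 0 < 2 ^ p := by positivity
  have hsucc : 2 ^ (p + 1) * q = 2 * (2 ^ p * q) := by ring
  rw [Nat.mul_sub, mul_one, hsucc, mul_left_comm (2 ^ p) 2 q]
  omega

theorem hmap_apply_of_not_dvd {n k : ℕ} (α : ℕ → Bool) (h : ¬ 2 ^ n ∣ k + 1) :
    hmap n α k = α k :=
  if_neg h

theorem hmap_apply_of_dvd {n k : ℕ} (α : ℕ → Bool) (h : 2 ^ n ∣ k + 1) :
    hmap n α k = α (2 ^ (n + 1) * ((k + 1) / 2 ^ n) - 2 ^ n - 1) :=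
  if_pos h

theorem stmt_6_general (p n : ℕ) (hpn : p < n) (α : ℕ → Bool) :
    hmap p (hmap n α) = hmap p α := by
  funext k
  by_cases hk : 2 ^ p ∣ k + 1
  · obtain ⟨q, hq⟩ := hk
    have hq0 : 0 < q := Nat.pos_of_ne_zero fun h => by simp [h] at hq
    have hkq : (k + 1) / 2 ^ p = q := by rw [hq, Nat.mul_div_cancel_left _ (by positivity)]
    have hodd : Odd (2 * q - 1) := Nat.Even.sub_odd (by omega) (even_two_mul q) odd_one
    rw [hmap_apply_of_dvd _ ⟨q, hq⟩, hmap_apply_of_dvd _ ⟨q, hq⟩, hkq, hmap_apply_of_not_dvd]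
    rw [two_pow_succ_mul_sub_add_one hq0]
    exact not_two_pow_dvd_two_pow_mul_odd hpn hodd
  · have hkn : ¬ 2 ^ n ∣ k + 1 := fun h => hk ((Nat.pow_dvd_pow 2 hpn.le).trans h)
    rw [hmap_apply_of_not_dvd _ hk, hmap_apply_of_not_dvd _ hk, hmap_apply_of_not_dvd _ hkn]

/-- For `0 < p < n` and every `α ∈ 2^ω`, `h p (h n α) = h p α`. -/
theorem stmt_6 (p n : ℕ) (hp : 0 < p) (hpn : p < n) (α : ℕ → Bool) :
    hmap p (hmap n α) = hmap p α :=
  stmt_6_general p n hpn α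
end

section
/- With h_n defined by h_n(α)(k) = α(k) if 2^n does not divide k+1, and h_n(α)(2^n q − 1) = α(2^{n+1}q − 2^n − 1): for each n > 0 the set {α ∈ 2^ω : h_n(α) ≠ α} is a dense open subset of 2^ω. -/
/-! Each coordinate of `h_n α` is a coordinate of `α`, so `h_n` is continuous and its non-fixed
points form an open set. For `q ≥ 2`, `h_n` copies coordinate `2^(n+1) q - 2^n - 1` of `α` to the
strictly smaller coordinate `2^n q - 1`; flipping `α` at the larger one gives a non-fixed point,
and as `q → ∞` these points converge to `α`. -/

open Filter Topology

theorem continuous_hmap (n : ℕ) : Continuous (hmap n) :=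
  continuous_pi fun k => by
    unfold hmap
    split_ifs <;> exact continuous_apply _

theorem hmap_apply_two_pow_mul_sub_one (n : ℕ) {q : ℕ} (hq : 0 < q) (α : ℕ → Bool) :
    hmap n α (2 ^ n * q - 1) = α (2 ^ (n + 1) * q - 2 ^ n - 1) := by
  have hk : 2 ^ n * q - 1 + 1 = 2 ^ n * q := Nat.sub_add_cancel (Nat.mul_pos (by positivity) hq)
  simp [hmap, hk, Nat.mul_div_cancel_left q (by positivity : 0 < 2 ^ n)]

theorem tendsto_update_nhds {ι X : Type*} [DecidableEq ι] [TopologicalSpace X]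
    (α : ι → X) {j : ℕ → ι} (hj : Tendsto j atTop cofinite) (x : ℕ → X) :
    Tendsto (fun m => Function.update α (j m) (x m)) atTop (𝓝 α) :=
  tendsto_pi_nhds.2 fun i => tendsto_const_nhds.congr' <|
    (hj.eventually (eventually_cofinite_ne i)).mono fun _ hm =>
      (Function.update_of_ne hm.symm _ _).symm

theorem dense_setOf_ne_self {ι X : Type*} [TopologicalSpace X] [Nontrivial X]
    (f : (ι → X) → ι → X) {k j : ℕ → ι} (hj : Tendsto j atTop cofinite) (hkj : ∀ m, k m ≠ j m)
    (hf : ∀ m α, f α (k m) = α (j m)) : Dense {α | f α ≠ α} := by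
  classical
  intro α
  choose x hx using fun m => exists_ne (α (k m))
  refine mem_closure_of_tendsto (tendsto_update_nhds α hj x) (Eventually.of_forall fun m h => ?_)
  have := congrFun h (k m)
  rw [hf, Function.update_self, Function.update_of_ne (hkj m)] at this
  exact hx m this

theorem stmt_8_general (n : ℕ) :
    IsOpen {α : ℕ → Bool | hmap n α ≠ α} ∧ Dense {α : ℕ → Bool | hmap n α ≠ α} := by
  refine ⟨isOpen_ne_fun (continuous_hmap n) continuous_id, ?_⟩
  have ha : 0 < 2 ^ n := by positivity
  have hidx : ∀ m, 2 ^ n * (m + 2) - 1 < 2 ^ (n + 1) * (m + 2) - 2 ^ n - 1 ∧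
      m ≤ 2 ^ (n + 1) * (m + 2) - 2 ^ n - 1 := fun m => by
    rw [pow_succ]
    generalize 2 ^ n = a at *
    have hm : m ≤ a * m := Nat.le_mul_of_pos_left m ha
    have : a * 2 * (m + 2) = 2 * (a * m) + 4 * a := by ring
    have : a * (m + 2) = a * m + 2 * a := by ring
    omega
  refine dense_setOf_ne_self (hmap n) (k := fun m => 2 ^ n * (m + 2) - 1) ?_ (fun m => (hidx m).1.ne)
    fun m => hmap_apply_two_pow_mul_sub_one n (m + 1).succ_pos
  rw [Nat.cofinite_eq_atTop]
  exact tendsto_atTop_mono (fun m => (hidx m).2) tendsto_id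

/-- For each `n > 0`, `{α : h n α ≠ α}` is a dense open subset of `2^ω`. -/
theorem stmt_8 (n : ℕ) (hn : 0 < n) :
    IsOpen {α : ℕ → Bool | hmap n α ≠ α} ∧ Dense {α : ℕ → Bool | hmap n α ≠ α} :=
  stmt_8_general n
end

section
/- For n ∈ ω let f_n be the map with domain {α ∈ ω^ω : α(n) = 1} sending α to the sequence β with β(p) = α(p) for p ≠ n and β(n) = N(α↾n ⌢ 1), where N(s) = ∏_{i<|s|} q_i^{s(i)+1} with q_i the i-th prime. Then f_n is a homeomorphism from its (clopen) domain onto the clopen set {α ∈ ω^ω : α(n) = N(α↾n ⌢ 1)}, and α <_lex f_n(α) for every α in the domain. -/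
/-!
Changing one coordinate of a point of a product to a continuous function of the other
coordinates is a homeomorphism from a coordinate fibre onto the graph of that function, with
inverse resetting the coordinate. For `f n` the function is `α ↦ N(α↾n ⌢ 1)`, which only sees
finitely many coordinates of `α` and is therefore continuous on Baire space. Since
`N(α↾n ⌢ 1) > 1 = α n`, the first coordinate where `α` and `f n α` differ is `n`, where
`f n α` is larger.
-/

noncomputable def Nmap (s : List ℕ) : ℕ :=
  if s = [] then 0
  else ∏ i ∈ Finset.range s.length, (Nat.nth Nat.Prime i) ^ (s.getD i 0 + 1)

/-- `f n` changes the `n`-th coordinate of `α` (from `1`, on its domain) to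
`N(α↾n ⌢ 1)`. -/
noncomputable def fmap (n : ℕ) (α : ℕ → ℕ) : ℕ → ℕ :=
  Function.update α n (Nmap (List.ofFn (fun i : Fin n => α i) ++ [1]))

open Function

theorem isClopen_setOf_eq_of_discrete {X β : Type*} [TopologicalSpace X] [TopologicalSpace β]
    [DiscreteTopology β] {f g : X → β} (hf : Continuous f) (hg : Continuous g) :
    IsClopen {x | f x = g x} :=
  (isClopen_discrete {p : β × β | p.1 = p.2}).preimage (hf.prodMk hg)

section UpdateCoord

variable {ι β : Type*} [DecidableEq ι] [TopologicalSpace β]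

def Homeomorph.updateCoord (i : ι) (c : β) (F : (ι → β) → β) (hF : Continuous F)
    (hFi : ∀ α v, F (update α i v) = F α) :
    {α : ι → β | α i = c} ≃ₜ {α : ι → β | α i = F α} where
  toFun α := ⟨update α i (F α), by simp [hFi]⟩
  invFun α := ⟨update α i c, by simp⟩
  left_inv := by
    rintro ⟨α, hα : α i = c⟩
    ext1
    simp only [update_idem, ← hα, update_eq_self]
  right_inv := by
    rintro ⟨α, hα : α i = F α⟩
    ext1
    simp only [hFi, update_idem, ← hα, update_eq_self]
  continuous_toFun := by
    exact (continuous_subtype_val.update i (hF.comp continuous_subtype_val)).subtype_mk _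
  continuous_invFun := by
    exact (continuous_subtype_val.update i continuous_const).subtype_mk _

end UpdateCoord

theorem continuous_comp_finPrefix {β X : Type*} [TopologicalSpace β] [DiscreteTopology β]
    [TopologicalSpace X] (n : ℕ) (g : (Fin n → β) → X) :
    Continuous fun α : ℕ → β => g fun i => α i :=
  continuous_of_discreteTopology.comp (continuous_pi fun i => continuous_apply (i : ℕ))

theorem List.ofFn_update_of_le {β : Type*} {n m : ℕ} (h : n ≤ m) (α : ℕ → β) (v : β) :
    List.ofFn (fun i : Fin n => update α m v i) = List.ofFn fun i : Fin n => α i :=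
  congrArg List.ofFn (funext fun i => update_of_ne (i.2.trans_le h).ne _ _)

theorem one_lt_Nmap {s : List ℕ} (hs : s ≠ []) : 1 < Nmap s := by
  rw [Nmap, if_neg hs]
  have h0 : 0 ∈ Finset.range s.length := by simpa using List.length_pos_iff.mpr hs
  calc 1 < Nat.nth Nat.Prime 0 ^ (s.getD 0 0 + 1) :=
        Nat.one_lt_pow (Nat.succ_ne_zero _) (Nat.prime_nth_prime 0).two_le
    _ ≤ ∏ i ∈ Finset.range s.length, Nat.nth Nat.Prime i ^ (s.getD i 0 + 1) :=
      Finset.single_le_prod' (f := fun i => Nat.nth Nat.Prime i ^ (s.getD i 0 + 1))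
        (fun i _ => Nat.one_le_pow _ _ (Nat.prime_nth_prime i).pos) h0

/-- The domain `{α : α n = 1}` and the image
`{α : α n = N(α↾n ⌢ 1)}` are clopen, `f n` is a homeomorphism between them,
and `α <_lex f n α` on the domain. -/
theorem stmt_9 (n : ℕ) :
    IsClopen {α : ℕ → ℕ | α n = 1} ∧
    IsClopen {α : ℕ → ℕ | α n = Nmap (List.ofFn (fun i : Fin n => α i) ++ [1])} ∧
    (∃ e : {α : ℕ → ℕ | α n = 1} ≃ₜ
        {α : ℕ → ℕ | α n = Nmap (List.ofFn (fun i : Fin n => α i) ++ [1])},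
      ∀ α, (e α : ℕ → ℕ) = fmap n (α : ℕ → ℕ)) ∧
    (∀ α : ℕ → ℕ, α n = 1 → Pi.Lex (· < ·) (fun {_} => (· < ·)) α (fmap n α)) := by
  have hF : Continuous fun α : ℕ → ℕ => Nmap (List.ofFn (fun i : Fin n => α i) ++ [1]) :=
    continuous_comp_finPrefix n fun v => Nmap (List.ofFn v ++ [1])
  have hFn (α : ℕ → ℕ) (v : ℕ) : Nmap (List.ofFn (fun i : Fin n => update α n v i) ++ [1]) =
      Nmap (List.ofFn (fun i : Fin n => α i) ++ [1]) := by
    rw [List.ofFn_update_of_le le_rfl]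
  refine ⟨isClopen_setOf_eq_of_discrete (continuous_apply n) continuous_const,
    isClopen_setOf_eq_of_discrete (continuous_apply n) hF,
    ⟨Homeomorph.updateCoord n 1 _ hF hFn, fun α => rfl⟩, fun α hα => ?_⟩
  refine Pi.lt_toLex_update_self_iff.mpr ?_
  rw [hα]
  exact one_lt_Nmap (by simp)
end

section
/- With f_n as defined (changing the n-th coordinate from 1 to N(α↾n ⌢ 1)), the sequence of graphs (Gr(f_n))_{n∈ω} converges to the diagonal Δ(ω^ω), i.e., Δ(ω^ω) = closure(⋃_n Gr(f_n)) \ ⋃_n Gr(f_n) in ω^ω × ω^ω. -/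
open Topology Filter Set

lemma Nmap_ne_one {s : List ℕ} (hs : s ≠ []) : Nmap s ≠ 1 := by
  intro h
  rw [Nmap, if_neg hs] at h
  have h2_dvd : Nat.nth Nat.Prime 0 ∣
      ∏ i ∈ Finset.range s.length, (Nat.nth Nat.Prime i) ^ (s.getD i 0 + 1) :=
    (dvd_pow_self _ (Nat.succ_ne_zero _)).trans
      (Finset.dvd_prod_of_mem _ (Finset.mem_range.mpr (List.length_pos_iff.mpr hs)))
  rw [h] at h2_dvd
  exact (Nat.prime_nth_prime 0).ne_one (Nat.dvd_one.mp h2_dvd)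

@[simp]
lemma fmap_apply_self (n : ℕ) (α : ℕ → ℕ) :
    fmap n α n = Nmap (List.ofFn (fun i : Fin n => α i) ++ [1]) :=
  Function.update_self _ _ _

@[simp]
lemma fmap_apply_of_ne {n i : ℕ} (h : i ≠ n) (α : ℕ → ℕ) : fmap n α i = α i :=
  Function.update_of_ne h _ _

lemma fmap_apply_self_ne_one (n : ℕ) (α : ℕ → ℕ) : fmap n α n ≠ 1 := by
  rw [fmap_apply_self]
  exact Nmap_ne_one (by simp)

lemma continuous_fmap (n : ℕ) : Continuous (fmap n) :=
  continuous_id.update n <|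
    (continuous_of_discreteTopology (f := fun v : Fin n → ℕ ↦ Nmap (List.ofFn v ++ [1]))).comp
      (continuous_pi fun i : Fin n ↦ continuous_apply (i : ℕ))

def fGraph (n : ℕ) : Set ((ℕ → ℕ) × (ℕ → ℕ)) := {p | p.1 n = 1 ∧ p.2 = fmap n p.1}

lemma isClosed_fGraph (n : ℕ) : IsClosed (fGraph n) :=
  (isClosed_eq ((continuous_apply n).comp continuous_fst) continuous_const).inter
    (isClosed_eq continuous_snd ((continuous_fmap n).comp continuous_fst))

lemma apply_eq_of_mem_fGraph {n i : ℕ} {p : (ℕ → ℕ) × (ℕ → ℕ)} (hp : p ∈ fGraph n)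
    (hi : i ≠ n) : p.1 i = p.2 i := by
  rw [hp.2, fmap_apply_of_ne hi]

lemma notMem_fGraph_of_fst_eq_snd {n : ℕ} {p : (ℕ → ℕ) × (ℕ → ℕ)} (hp : p.1 = p.2) :
    p ∉ fGraph n := fun h ↦ by
  have := fmap_apply_self_ne_one n p.1
  rw [← h.2, ← hp, h.1] at this
  exact this rfl

lemma tendsto_update_atTop {X : Type*} [TopologicalSpace X] (α : ℕ → X) (c : ℕ → X) :
    Tendsto (fun n ↦ Function.update α n (c n)) atTop (𝓝 α) :=
  tendsto_pi_nhds.mpr fun i ↦ tendsto_const_nhds.congr' <|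
    (eventually_gt_atTop i).mono fun _ hn ↦ (Function.update_of_ne hn.ne _ _).symm

lemma mem_closure_iUnion_fGraph_of_fst_eq_snd {p : (ℕ → ℕ) × (ℕ → ℕ)} (hp : p.1 = p.2) :
    p ∈ closure (⋃ n, fGraph n) := by
  let β : ℕ → ℕ → ℕ := fun n ↦ Function.update p.1 n 1
  have hβ_mem : ∀ n, (β n, fmap n (β n)) ∈ ⋃ n, fGraph n := fun n ↦
    mem_iUnion.mpr ⟨n, by simp [β], rfl⟩
  have hβ_fmap : ∀ n, fmap n (β n) = Function.update p.1 n (fmap n (β n) n) := fun n ↦ by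
    simp [fmap, β]
  have hlim : Tendsto (fun n ↦ (β n, fmap n (β n))) atTop (𝓝 p) := by
    rw [nhds_prod_eq, ← hp]
    refine (tendsto_update_atTop _ _).prodMk ?_
    simpa only [← hβ_fmap] using tendsto_update_atTop p.1 fun n ↦ fmap n (β n) n
  exact mem_closure_of_tendsto hlim (Eventually.of_forall hβ_mem)

lemma mem_fGraph_of_mem_closure {k : ℕ} {p : (ℕ → ℕ) × (ℕ → ℕ)}
    (hp : p ∈ closure (⋃ n, fGraph n)) (hk : p.1 k ≠ p.2 k) : p ∈ fGraph k := by
  let W : Set ((ℕ → ℕ) × (ℕ → ℕ)) := (fun q ↦ (q.1 k, q.2 k)) ⁻¹' {(p.1 k, p.2 k)}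
  have hW : IsOpen W := (isOpen_discrete _).preimage (by fun_prop)
  have hW_sub : W ∩ ⋃ n, fGraph n ⊆ fGraph k := by
    rintro q ⟨hqW, hq⟩
    obtain ⟨n, hqn⟩ := mem_iUnion.mp hq
    obtain rfl : n = k := by
      by_contra hnk
      simp only [W, mem_preimage, mem_singleton_iff, Prod.ext_iff] at hqW
      exact hk (hqW.1 ▸ hqW.2 ▸ apply_eq_of_mem_fGraph hqn (Ne.symm hnk))
    exact hqn
  exact (isClosed_fGraph k).closure_subset_iff.mpr hW_sub (hW.inter_closure ⟨rfl, hp⟩)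

/-- The sequence of graphs `(Gr (f n))_n` converges to the diagonal of `ω^ω`:
`Δ(ω^ω) = closure (⋃ n, Gr (f n)) \ ⋃ n, Gr (f n)`. -/
theorem stmt_10 :
    {p : (ℕ → ℕ) × (ℕ → ℕ) | p.1 = p.2} =
      closure (⋃ n, {p : (ℕ → ℕ) × (ℕ → ℕ) | p.1 n = 1 ∧ p.2 = fmap n p.1}) \
        ⋃ n, {p : (ℕ → ℕ) × (ℕ → ℕ) | p.1 n = 1 ∧ p.2 = fmap n p.1} := by
  change _ = closure (⋃ n, fGraph n) \ ⋃ n, fGraph n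
  ext p
  constructor
  · intro (hp : p.1 = p.2)
    exact ⟨mem_closure_iUnion_fGraph_of_fst_eq_snd hp,
      mem_iUnion.not.mpr fun ⟨_, h⟩ ↦ notMem_fGraph_of_fst_eq_snd hp h⟩
  · rintro ⟨hp_closure, hp_not_mem⟩
    by_contra hne
    obtain ⟨k, hk⟩ := Function.ne_iff.mp hne
    exact hp_not_mem (mem_iUnion.mpr ⟨k, mem_fGraph_of_mem_closure hp_closure hk⟩)
end

section
/- Define the relation ℛ on finite sequences of naturals by: s ℛ t iff |s| = |t| and (N_s × N_t) meets Gr(f_∅) ∪ ⋃_n Gr(f_n), where N_s is the basic clopen set of ω^ω determined by s, f_∅ = id, and f_n changes the n-th coordinate from 1 to N(α↾n ⌢ 1). Let ℰ be the equivalence relation generated by ℛ. Then every ℰ-equivalence class is finite. -/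
/-- `s ℛ t` iff `|s| = |t|` and `(N_s × N_t)` meets
`Gr(f_∅) ∪ ⋃_n Gr(f_n)`, where `f_∅ = id` and `f_n` has domain
`{α : α n = 1}`. -/
def Rrel (s t : List ℕ) : Prop :=
  s.length = t.length ∧ ∃ α β : ℕ → ℕ,
    (∀ i < s.length, α i = s.getD i 0) ∧ (∀ i < t.length, β i = t.getD i 0) ∧
    (β = α ∨ ∃ n, α n = 1 ∧ β = fmap n α)

/-! An `ℛ`-step changes at most one coordinate `n`, exchanging the value `1` with
`N(α↾n ⌢ 1)`. As `N` is monotone in each coordinate, the lists of length `|s|` bounded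
coordinatewise by `b n = max (s n) (max 1 (N(b↾n ⌢ 1)))` form a finite set that is closed
under `ℛ` in both directions and contains `s`, hence contains its `ℰ`-class. -/

lemma Relation.EqvGen.mem_iff_mem {α : Type*} {r : α → α → Prop} {S : Set α}
    (hr : ∀ a b, r a b → (a ∈ S ↔ b ∈ S)) {a b : α} (hab : Relation.EqvGen r a b) :
    a ∈ S ↔ b ∈ S :=
  (Equivalence.eqvGen_iff (r := fun a b => (a ∈ S ↔ b ∈ S))
    ⟨fun _ => Iff.rfl, Iff.symm, Iff.trans⟩).mp (hab.mono hr a b)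

lemma List.finite_setOf_length_eq_getD_le (ℓ : ℕ) (b : ℕ → ℕ) :
    {t : List ℕ | t.length = ℓ ∧ ∀ i < t.length, t.getD i 0 ≤ b i}.Finite := by
  refine ((Set.Finite.pi fun i : Fin ℓ => Set.finite_Iic (b i)).image List.ofFn).subset ?_
  rintro t ⟨rfl, ht⟩
  exact ⟨fun i => t.getD i 0, fun i _ => ht i i.isLt,
    List.ext_getElem (by simp) fun i _ _ => by simp⟩

lemma Nmap_le_Nmap {s t : List ℕ} (hlen : s.length = t.length)
    (hle : ∀ i, s.getD i 0 ≤ t.getD i 0) : Nmap s ≤ Nmap t := by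
  unfold Nmap
  split_ifs with hs ht ht
  · exact le_rfl
  · exact Nat.zero_le _
  · exact absurd (List.length_eq_zero_iff.mp (by simpa [ht] using hlen)) hs
  · rw [hlen]
    exact Finset.prod_le_prod' fun i _ =>
      Nat.pow_le_pow_right (Nat.prime_nth_prime i).pos (Nat.add_le_add_right (hle i) 1)

lemma Nmap_ofFn_append_le {n : ℕ} {f g : Fin n → ℕ} (hfg : ∀ i, f i ≤ g i) (l : List ℕ) :
    Nmap (List.ofFn f ++ l) ≤ Nmap (List.ofFn g ++ l) := by
  refine Nmap_le_Nmap (by simp) fun i => ?_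
  rcases lt_or_ge i n with hi | hi
  · rw [List.getD_append _ _ _ _ (by simpa), List.getD_append _ _ _ _ (by simpa),
      List.getD_eq_getElem _ _ (by simpa), List.getD_eq_getElem _ _ (by simpa)]
    simpa using hfg ⟨i, hi⟩
  · rw [List.getD_append_right _ _ _ _ (by simpa), List.getD_append_right _ _ _ _ (by simpa)]
    simp

namespace Rrel

noncomputable def bound (s : List ℕ) (n : ℕ) : ℕ :=
  max (s.getD n 0) (max 1 (Nmap (List.ofFn (fun j : Fin n => bound s j) ++ [1])))
termination_by n
decreasing_by exact j.isLt

lemma getD_le_bound (s : List ℕ) (n : ℕ) : s.getD n 0 ≤ bound s n := by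
  rw [bound]; exact le_max_left _ _

lemma one_le_bound (s : List ℕ) (n : ℕ) : 1 ≤ bound s n := by
  rw [bound]; exact le_max_of_le_right (le_max_left _ _)

lemma fmap_self_le_bound (s : List ℕ) {n : ℕ} {α : ℕ → ℕ} (hα : ∀ j < n, α j ≤ bound s j) :
    fmap n α n ≤ bound s n := by
  rw [fmap, Function.update_self, bound]
  exact le_max_of_le_right <| le_max_of_le_right <|
    Nmap_ofFn_append_le (fun j => hα j j.isLt) [1]

lemma forall_fmap_le_bound_iff (s : List ℕ) {n m : ℕ} {α : ℕ → ℕ} (hα : α n = 1) :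
    (∀ i < m, fmap n α i ≤ bound s i) ↔ ∀ i < m, α i ≤ bound s i := by
  refine ⟨fun h i hi => ?_, fun h i hi => ?_⟩ <;> rcases eq_or_ne i n with rfl | hin
  · exact hα ▸ one_le_bound s i
  · simpa [fmap, Function.update_of_ne hin] using h i hi
  · exact fmap_self_le_bound s fun j hj => h j (hj.trans hi)
  · simpa [fmap, Function.update_of_ne hin] using h i hi

def Bounded (s : List ℕ) : Set (List ℕ) :=
  {t | t.length = s.length ∧ ∀ i < t.length, t.getD i 0 ≤ bound s i}

lemma mem_bounded_iff_of_getD {s l : List ℕ} {γ : ℕ → ℕ}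
    (hγ : ∀ i < l.length, γ i = l.getD i 0) :
    l ∈ Bounded s ↔ l.length = s.length ∧ ∀ i < l.length, γ i ≤ bound s i :=
  and_congr_right' (forall₂_congr fun i hi => by rw [hγ i hi])

lemma mem_bounded_iff {s a b : List ℕ} (h : Rrel a b) : a ∈ Bounded s ↔ b ∈ Bounded s := by
  obtain ⟨hlen, α, β, hα, hβ, hβα⟩ := h
  rw [mem_bounded_iff_of_getD hα, mem_bounded_iff_of_getD hβ, hlen]
  rcases hβα with rfl | ⟨n, hn, rfl⟩
  · rfl
  · rw [forall_fmap_le_bound_iff s hn]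

end Rrel

/-- Every equivalence class of the equivalence relation generated by `ℛ` is
finite. -/
theorem stmt_14 (s : List ℕ) : {t | Relation.EqvGen Rrel s t}.Finite := by
  refine (List.finite_setOf_length_eq_getD_le s.length (Rrel.bound s)).subset fun t ht => ?_
  exact (ht.mem_iff_mem fun _ _ => Rrel.mem_bounded_iff).mp
    ⟨rfl, fun i _ => Rrel.getD_le_bound s i⟩
end

section
/- With f_s as above (f_s changes the coordinates at positions N(s↾i), 1 ≤ i ≤ |s|, from 1 to N(α↾(N(s↾i)+1))): for every finite sequence s and every n ∈ ω, the sequence of graphs (Gr(f_{s⌢n}))_n converges to Gr(f_s), i.e., Gr(f_s) = closure(⋃_n Gr(f_{s⌢n})) \ ⋃_n Gr(f_{s⌢n}) in ω^ω × ω^ω. -/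
open Classical in
/-- `f_s (α) (p) = N(α↾(p+1))` if `p = N(s↾i)` for some `1 ≤ i ≤ |s|`, and
`f_s (α) (p) = α p` otherwise. -/
noncomputable def fS (s : List ℕ) (α : ℕ → ℕ) : ℕ → ℕ := fun p =>
  if ∃ i, 1 ≤ i ∧ i ≤ s.length ∧ p = Nmap (s.take i) then
    Nmap (List.ofFn (fun j : Fin (p + 1) => α j))
  else α p

/-- The domain of `f_s`: `α (N(s↾i)) = 1` for all `1 ≤ i ≤ |s|`. -/
def AS (s : List ℕ) : Set (ℕ → ℕ) :=
  {α | ∀ i, 1 ≤ i → i ≤ s.length → α (Nmap (s.take i)) = 1}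

/-- The graph of `f_s`, as a subset of `ω^ω × ω^ω`. -/
def GrS (s : List ℕ) : Set ((ℕ → ℕ) × (ℕ → ℕ)) :=
  {p | p.1 ∈ AS s ∧ p.2 = fS s p.1}

/-!
Write `p_n = N(s⌢n)`. The prefix codes of `s⌢n` are those of `s` together with `p_n`, which
exceeds all of them, and `n ↦ p_n` is injective. So `f_{s⌢n}` is `f_s` with the single coordinate
`p_n` overwritten by a code `≥ 2`, while `A_{s⌢n}` additionally demands `α(p_n) = 1`; in particular
no point of `Gr(f_s)` lies in `Gr(f_{s⌢n})`, and `(α, f_s α)` is the limit of the points of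
`Gr(f_{s⌢n})` above `α[p_n ↦ 1]`. Conversely, a sequence in `⋃ₙ Gr(f_{s⌢n})` converging outside
the union cannot visit one (closed) graph infinitely often, so the overwritten coordinates escape
every finite set and, `f_s` being continuous, the limit lies in `Gr(f_s)`.
-/

open Filter Function Set Topology

lemma nmap_of_ne_nil {s : List ℕ} (hs : s ≠ []) :
    Nmap s = ∏ i ∈ Finset.range s.length, Nat.nth Nat.Prime i ^ (s.getD i 0 + 1) :=
  if_neg hs

lemma two_le_nmap {s : List ℕ} (hs : s ≠ []) : 2 ≤ Nmap s := by
  rw [nmap_of_ne_nil hs]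
  have h0 : 0 ∈ Finset.range s.length := Finset.mem_range.2 (List.length_pos_iff.2 hs)
  calc 2 ≤ Nat.nth Nat.Prime 0 := (Nat.prime_nth_prime 0).two_le
    _ ≤ Nat.nth Nat.Prime 0 ^ (s.getD 0 0 + 1) := Nat.le_self_pow (by omega) _
    _ ≤ _ := Finset.single_le_prod' (f := fun i => Nat.nth Nat.Prime i ^ (s.getD i 0 + 1))
      (fun i _ => Nat.one_le_pow _ _ (Nat.prime_nth_prime i).pos) h0

lemma nmap_take_le (s : List ℕ) {i : ℕ} (hi : i ≤ s.length) : Nmap (s.take i) ≤ Nmap s := by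
  rcases eq_or_ne (s.take i) [] with h | h
  · simp [h, Nmap]
  have hs : s ≠ [] := by rintro rfl; simp at h
  rw [nmap_of_ne_nil h, nmap_of_ne_nil hs, List.length_take_of_le hi]
  calc ∏ j ∈ Finset.range i, Nat.nth Nat.Prime j ^ ((s.take i).getD j 0 + 1)
      = ∏ j ∈ Finset.range i, Nat.nth Nat.Prime j ^ (s.getD j 0 + 1) :=
        Finset.prod_congr rfl fun j hj => by
          simp [List.getD_eq_getElem?_getD, Finset.mem_range.1 hj]
    _ ≤ _ := Finset.prod_le_prod_of_subset_of_one_le' (Finset.range_subset_range.2 hi)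
        fun j _ _ => Nat.one_le_pow _ _ (Nat.prime_nth_prime j).pos

lemma nmap_append (s : List ℕ) (n : ℕ) :
    Nmap (s ++ [n]) = (∏ i ∈ Finset.range s.length, Nat.nth Nat.Prime i ^ (s.getD i 0 + 1))
      * Nat.nth Nat.Prime s.length ^ (n + 1) := by
  rw [nmap_of_ne_nil (by simp), List.length_append, List.length_singleton,
    Finset.prod_range_succ]
  congr 1
  · exact Finset.prod_congr rfl fun i hi => by
      rw [List.getD_append _ _ _ _ (Finset.mem_range.1 hi)]
  · simp

lemma nmap_lt_nmap_append (s : List ℕ) (n : ℕ) : Nmap s < Nmap (s ++ [n]) := by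
  rcases eq_or_ne s [] with rfl | hs
  · exact lt_of_lt_of_le (by simp [Nmap]) (two_le_nmap (List.cons_ne_nil n []))
  rw [nmap_append, ← nmap_of_ne_nil hs]
  exact lt_mul_of_one_lt_right (Nat.pos_of_ne_zero (by have := two_le_nmap hs; omega))
    (Nat.one_lt_pow (by omega) (Nat.prime_nth_prime _).two_le)

lemma nmap_append_injective (s : List ℕ) : Injective fun n => Nmap (s ++ [n]) := by
  intro m n h
  simp only [nmap_append] at h
  have hprod := Finset.prod_pos (s := Finset.range s.length)
    fun i _ => Nat.pow_pos (n := s.getD i 0 + 1) (Nat.prime_nth_prime i).pos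
  have := Nat.pow_right_injective (Nat.prime_nth_prime s.length).two_le
    (Nat.eq_of_mul_eq_mul_left hprod h)
  omega

/-- The positions `N(s↾i)`, `1 ≤ i ≤ |s|`, at which `f_s` changes its argument. -/
def prefixCodes (s : List ℕ) : Set ℕ :=
  {p | ∃ i, 1 ≤ i ∧ i ≤ s.length ∧ p = Nmap (s.take i)}

lemma lt_nmap_append_of_mem_prefixCodes {s : List ℕ} {p : ℕ} (hp : p ∈ prefixCodes s) (n : ℕ) :
    p < Nmap (s ++ [n]) := by
  obtain ⟨i, -, hi, rfl⟩ := hp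
  exact (nmap_take_le s hi).trans_lt (nmap_lt_nmap_append s n)

lemma prefixCodes_append (s : List ℕ) (n : ℕ) :
    prefixCodes (s ++ [n]) = insert (Nmap (s ++ [n])) (prefixCodes s) := by
  ext p
  simp only [prefixCodes, mem_insert_iff, mem_ofPred_eq, List.length_append,
    List.length_singleton]
  constructor
  · rintro ⟨i, h1, h2, rfl⟩
    rcases Nat.lt_or_ge s.length i with hi | hi
    · left
      rw [show i = (s ++ [n]).length by simp; omega, List.take_length]
    · exact Or.inr ⟨i, h1, hi, by rw [List.take_append_of_le_length hi]⟩
  · rintro (rfl | ⟨i, h1, h2, rfl⟩)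
    · exact ⟨s.length + 1, by omega, le_rfl, by rw [List.take_of_length_le (by simp)]⟩
    · exact ⟨i, h1, by omega, by rw [List.take_append_of_le_length h2]⟩

lemma fS_apply_of_mem {s : List ℕ} {p : ℕ} (hp : p ∈ prefixCodes s) (α : ℕ → ℕ) :
    fS s α p = Nmap (List.ofFn fun j : Fin (p + 1) => α j) :=
  if_pos hp

lemma fS_apply_of_notMem {s : List ℕ} {p : ℕ} (hp : p ∉ prefixCodes s) (α : ℕ → ℕ) :
    fS s α p = α p :=
  if_neg hp

lemma fS_append (s : List ℕ) (n : ℕ) (α : ℕ → ℕ) :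
    fS (s ++ [n]) α = update (fS s α) (Nmap (s ++ [n]))
      (Nmap (List.ofFn fun j : Fin (Nmap (s ++ [n]) + 1) => α j)) := by
  funext p
  rcases eq_or_ne p (Nmap (s ++ [n])) with rfl | hp
  · have hmem : Nmap (s ++ [n]) ∈ prefixCodes (s ++ [n]) := by simp [prefixCodes_append]
    rw [update_self, fS_apply_of_mem hmem]
  · rw [update_of_ne hp]
    by_cases hmem : p ∈ prefixCodes s
    · rw [fS_apply_of_mem hmem, fS_apply_of_mem (by simp [prefixCodes_append, hmem])]
    · rw [fS_apply_of_notMem hmem, fS_apply_of_notMem (by simp [prefixCodes_append, hp, hmem])]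

lemma continuous_fS (s : List ℕ) : Continuous (fS s) := by
  refine continuous_pi fun p => ?_
  by_cases hp : p ∈ prefixCodes s
  · simp only [fS_apply_of_mem hp]
    exact (continuous_of_discreteTopology (f := fun v : Fin (p + 1) → ℕ => Nmap (List.ofFn v))).comp
      (continuous_pi fun j => continuous_apply _)
  · simp only [fS_apply_of_notMem hp]
    exact continuous_apply p

lemma mem_AS_iff {s : List ℕ} {α : ℕ → ℕ} : α ∈ AS s ↔ ∀ p ∈ prefixCodes s, α p = 1 := by
  simp only [AS, prefixCodes, mem_ofPred_eq]
  grind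

lemma mem_AS_append {s : List ℕ} {n : ℕ} {α : ℕ → ℕ} :
    α ∈ AS (s ++ [n]) ↔ α ∈ AS s ∧ α (Nmap (s ++ [n])) = 1 := by
  simp [mem_AS_iff, prefixCodes_append, and_comm]

lemma isClosed_AS (s : List ℕ) : IsClosed (AS s) := by
  have : AS s = ⋂ p ∈ prefixCodes s, {α | α p = 1} := by
    ext α
    simp [mem_AS_iff]
  rw [this]
  exact isClosed_biInter fun p _ => isClosed_eq (continuous_apply p) continuous_const

lemma isClosed_GrS (s : List ℕ) : IsClosed (GrS s) :=
  ((isClosed_AS s).preimage continuous_fst).inter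
    (isClosed_eq continuous_snd ((continuous_fS s).comp continuous_fst))

lemma tendsto_update_of_tendsto_cofinite {κ ι X : Type*} [DecidableEq ι] [TopologicalSpace X]
    {l : Filter κ} {f : κ → ι → X} {g : ι → X} {p : κ → ι} {v : κ → X}
    (hf : Tendsto f l (𝓝 g)) (hp : Tendsto p l cofinite) :
    Tendsto (fun k => update (f k) (p k) (v k)) l (𝓝 g) := by
  refine tendsto_pi_nhds.2 fun i => (tendsto_pi_nhds.1 hf i).congr' ?_
  filter_upwards [hp (eventually_cofinite_ne i)] with k hk
  exact (update_of_ne (Ne.symm hk) _ _).symm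

lemma disjoint_GrS_GrS_append (s : List ℕ) (n : ℕ) : Disjoint (GrS s) (GrS (s ++ [n])) := by
  rw [Set.disjoint_left]
  rintro ⟨α, β⟩ ⟨-, hβ : β = fS s α⟩ ⟨hα', hβ' : β = fS (s ++ [n]) α⟩
  have hα1 : α (Nmap (s ++ [n])) = 1 := (mem_AS_append.1 hα').2
  have hβ1 : β (Nmap (s ++ [n])) = 1 := by
    rw [hβ, fS_apply_of_notMem (fun h => (lt_nmap_append_of_mem_prefixCodes h n).false), hα1]
  have hβ2 : 2 ≤ β (Nmap (s ++ [n])) := by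
    rw [hβ', fS_append, update_self]
    exact two_le_nmap (by simp)
  omega

lemma GrS_subset_closure_iUnion_GrS_append (s : List ℕ) :
    GrS s ⊆ closure (⋃ n, GrS (s ++ [n])) := by
  rintro ⟨α, β⟩ ⟨hα : α ∈ AS s, rfl : β = fS s α⟩
  set α' : ℕ → ℕ → ℕ := fun n => update α (Nmap (s ++ [n])) 1
  have hcodes : Tendsto (fun n => Nmap (s ++ [n])) atTop cofinite :=
    Nat.cofinite_eq_atTop ▸ (nmap_append_injective s).tendsto_cofinite
  have hα' : Tendsto α' atTop (𝓝 α) := tendsto_update_of_tendsto_cofinite tendsto_const_nhds hcodes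
  refine mem_closure_of_tendsto (f := fun n => (α' n, fS (s ++ [n]) (α' n)))
    (hα'.prodMk_nhds ?_) (Eventually.of_forall fun n => mem_iUnion.2 ⟨n, ?_, rfl⟩)
  · simp only [fS_append]
    exact tendsto_update_of_tendsto_cofinite (((continuous_fS s).tendsto α).comp hα') hcodes
  · refine mem_AS_append.2 ⟨mem_AS_iff.2 fun p hp => ?_, update_self _ _ _⟩
    show update α _ 1 p = 1
    rw [update_of_ne (lt_nmap_append_of_mem_prefixCodes hp n).ne]
    exact mem_AS_iff.1 hα p hp

lemma mem_GrS_of_tendsto {s : List ℕ} {x : (ℕ → ℕ) × (ℕ → ℕ)} {y : ℕ → (ℕ → ℕ) × (ℕ → ℕ)}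
    {n : ℕ → ℕ} (hy : ∀ k, y k ∈ GrS (s ++ [n k])) (hyx : Tendsto y atTop (𝓝 x))
    (hn : Tendsto n atTop cofinite) : x ∈ GrS s := by
  have hfst := (continuous_fst.tendsto x).comp hyx
  refine ⟨(isClosed_AS s).mem_of_tendsto hfst (Eventually.of_forall fun k => ?_), ?_⟩
  · exact (mem_AS_append.1 (hy k).1).1
  · refine tendsto_nhds_unique ((continuous_snd.tendsto x).comp hyx) ?_
    have hval : ∀ k, (y k).2 = update (fS s (y k).1) (Nmap (s ++ [n k])) _ := fun k =>
      (hy k).2.trans (fS_append s (n k) (y k).1)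
    simp only [Function.comp_def, hval]
    exact tendsto_update_of_tendsto_cofinite (((continuous_fS s).tendsto x.1).comp hfst)
      ((nmap_append_injective s).tendsto_cofinite.comp hn)

/-- For every finite sequence `s`, the sequence of graphs `(Gr(f_{s⌢n}))_n`
converges to `Gr(f_s)`:
`Gr(f_s) = closure (⋃ n, Gr(f_{s⌢n})) \ ⋃ n, Gr(f_{s⌢n})`. -/
theorem stmt_19 (s : List ℕ) :
    GrS s = closure (⋃ n : ℕ, GrS (s ++ [n])) \ ⋃ n : ℕ, GrS (s ++ [n]) := by
  ext x
  refine ⟨fun hx => ⟨GrS_subset_closure_iUnion_GrS_append s hx, ?_⟩, ?_⟩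
  · simp only [mem_iUnion, not_exists]
    exact fun n => (disjoint_GrS_GrS_append s n).notMem_of_mem_left hx
  · rintro ⟨hcl, hx⟩
    obtain ⟨y, hy, hyx⟩ := mem_closure_iff_seq_limit.1 hcl
    choose n hn using fun k => mem_iUnion.1 (hy k)
    by_cases hcof : Tendsto n atTop cofinite
    · exact mem_GrS_of_tendsto hn hyx hcof
    obtain ⟨m, hm⟩ : ∃ m, ∃ᶠ k in atTop, n k = m := by
      by_contra! h
      exact hcof (le_cofinite_iff_eventually_ne.2 fun m => h m)
    refine absurd (mem_iUnion.2 ⟨m, (isClosed_GrS _).mem_of_frequently_of_tendsto ?_ hyx⟩) hx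
    exact hm.mono fun k hk => hk ▸ hn k
end
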